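/- For every ℓ ≥ 1, with S_n := #{i : b_i < a_n} and D_n := S_n - n/φ (a real-valued quantity), one has |D_n| ≤ φℓ for all n ≥ 0. -/

import Mathlib

/-- The minimum excluded value of a set of natural numbers. -/
noncomputable def mex (S : Set ℕ) : ℕ := sInf {m : ℕ | m ∉ S}

/-- `MexSeq ℓ a b` says that `a`, `b` are the sequences defined by
    `a 0 = ℓ+1`, `b 0 = 2ℓ+2`, and for `n ≥ 1`:
    `a n = mex({a i, b i : i < n} ∪ {0,…,ℓ})`, `b n = a n + n + ℓ + 1`. -/
def MexSeq (ℓ : ℕ) (a b : ℕ → ℕ) : Prop :=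
  a 0 = ℓ + 1 ∧ b 0 = 2 * ℓ + 2 ∧
  (∀ n : ℕ, 1 ≤ n →
    a n = mex ({m : ℕ | ∃ i < n, m = a i ∨ m = b i} ∪ {m : ℕ | m ≤ ℓ})) ∧
  (∀ n : ℕ, 1 ≤ n → b n = a n + n + ℓ + 1)

noncomputable def phi : ℝ := (1 + Real.sqrt 5) / 2

/-!
Write `S n = bCount a b n`. The numbers below `a n` are `0, …, ℓ`, the `a i` with `i < n` and
the `b i` below `a n`, all distinct, so `a n = n + S n + ℓ + 1`. Comparing `a n` with `b (S n)` and `b (S n - 1)` through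
`b i = a i + i + ℓ + 1` turns this into the self-referential recursion
`S n + S (S n - 1) + ℓ ≤ n ≤ S n + S (S n) + ℓ`. Its solutions grow like `n / φ`: a strong
induction propagates `S n * φ ≤ n + 1` and `n * φ ≤ S n * φ ^ 2 + ℓ * φ + 1` together, each bound
at `n` coming from the other at a smaller argument via `φ ^ 2 = φ + 1`.
-/

open scoped goldenRatio

lemma mex_notMem {S : Set ℕ} (hS : S.Finite) : mex S ∉ S :=
  Nat.sInf_mem hS.exists_notMem

lemma mem_of_lt_mex {S : Set ℕ} {m : ℕ} (h : m < mex S) : m ∈ S := by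
  simpa using Nat.notMem_of_lt_sInf h

lemma mex_Iic (ℓ : ℕ) : mex (Set.Iic ℓ) = ℓ + 1 := by
  simp only [mex, Set.mem_Iic, not_le]
  exact (congrArg sInf (Set.Ici_add_one_eq_Ioi ℓ)).symm.trans csInf_Ici

lemma StrictMono.lt_ncard_setOf_lt_iff {b : ℕ → ℕ} (hb : StrictMono b) (x i : ℕ) :
    i < {j | b j < x}.ncard ↔ b i < x := by
  have hex : ∃ j, x ≤ b j := ⟨x, hb.id_le x⟩
  have hIio : {j | b j < x} = Set.Iio (Nat.find hex) := by
    ext j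
    simp only [Set.mem_ofPred_eq, Set.mem_Iio, Nat.lt_find_iff, not_le]
    exact ⟨fun hj k hk => (hb.monotone hk).trans_lt hj, fun h => h j le_rfl⟩
  rw [hIio, Set.ncard_Iio_nat, ← Set.mem_Iio, ← hIio, Set.mem_ofPred_eq]

def usedValues (ℓ : ℕ) (a b : ℕ → ℕ) (n : ℕ) : Set ℕ :=
  {m : ℕ | ∃ i < n, m = a i ∨ m = b i} ∪ {m : ℕ | m ≤ ℓ}

lemma usedValues_finite (ℓ : ℕ) (a b : ℕ → ℕ) (n : ℕ) : (usedValues ℓ a b n).Finite := by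
  refine ((((Set.finite_Iio n).image a).union ((Set.finite_Iio n).image b)).union
    (Set.finite_Iic ℓ)).subset ?_
  rintro m (⟨i, hi, rfl | rfl⟩ | hm)
  · exact Or.inl (Or.inl ⟨i, hi, rfl⟩)
  · exact Or.inl (Or.inr ⟨i, hi, rfl⟩)
  · exact Or.inr hm

lemma usedValues_mono (ℓ : ℕ) (a b : ℕ → ℕ) : Monotone (usedValues ℓ a b) := by
  rintro n n' hn m (⟨i, hi, hm⟩ | hm)
  · exact Or.inl ⟨i, hi.trans_le hn, hm⟩
  · exact Or.inr hm

noncomputable def bCount (a b : ℕ → ℕ) (n : ℕ) : ℕ := {i | b i < a n}.ncard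

namespace MexSeq

variable {ℓ : ℕ} {a b : ℕ → ℕ}

lemma b_eq (hab : MexSeq ℓ a b) (n : ℕ) : b n = a n + n + ℓ + 1 := by
  rcases Nat.eq_zero_or_pos n with rfl | hn
  · rw [hab.2.1, hab.1]; ring
  · exact hab.2.2.2 n hn

lemma a_eq_mex (hab : MexSeq ℓ a b) (n : ℕ) : a n = mex (usedValues ℓ a b n) := by
  rcases Nat.eq_zero_or_pos n with rfl | hn
  · have hS : usedValues ℓ a b 0 = Set.Iic ℓ := by ext; simp [usedValues]
    rw [hab.1, hS, mex_Iic]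
  · exact hab.2.2.1 n hn

lemma a_notMem_usedValues (hab : MexSeq ℓ a b) (n : ℕ) : a n ∉ usedValues ℓ a b n :=
  hab.a_eq_mex n ▸ mex_notMem (usedValues_finite ℓ a b n)

lemma mem_usedValues_of_lt_a (hab : MexSeq ℓ a b) {n m : ℕ} (h : m < a n) :
    m ∈ usedValues ℓ a b n :=
  mem_of_lt_mex (hab.a_eq_mex n ▸ h)

lemma lt_a (hab : MexSeq ℓ a b) (n : ℕ) : ℓ < a n :=
  not_le.1 fun h => hab.a_notMem_usedValues n (Or.inr h)

lemma a_strictMono (hab : MexSeq ℓ a b) : StrictMono a := by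
  refine strictMono_nat_of_lt_succ fun n => not_le.1 fun hle => hab.a_notMem_usedValues (n + 1) ?_
  rcases hle.eq_or_lt with heq | hlt
  · exact Or.inl ⟨n, n.lt_succ_self, Or.inl heq⟩
  · exact usedValues_mono ℓ a b n.le_succ (hab.mem_usedValues_of_lt_a hlt)

lemma a_ne_b (hab : MexSeq ℓ a b) (i j : ℕ) : a i ≠ b j := by
  rcases lt_or_ge j i with hji | hij
  · exact fun h => hab.a_notMem_usedValues i (Or.inl ⟨j, hji, Or.inr h⟩)
  · have := hab.a_strictMono.monotone hij
    have := hab.b_eq j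
    omega

lemma b_strictMono (hab : MexSeq ℓ a b) : StrictMono b := fun i j hij => by
  have := hab.a_strictMono hij
  rw [hab.b_eq i, hab.b_eq j]
  omega

lemma lt_bCount_iff (hab : MexSeq ℓ a b) (n i : ℕ) : i < bCount a b n ↔ b i < a n :=
  hab.b_strictMono.lt_ncard_setOf_lt_iff (a n) i

lemma range_a_eq (hab : MexSeq ℓ a b) (n : ℕ) :
    Finset.range (a n) = (Finset.range (ℓ + 1) ∪ (Finset.range n).image a) ∪
      (Finset.range (bCount a b n)).image b := by
  ext m
  simp only [Finset.mem_union, Finset.mem_image, Finset.mem_range, hab.lt_bCount_iff]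
  constructor
  · intro hm
    rcases hab.mem_usedValues_of_lt_a hm with ⟨i, hi, rfl | rfl⟩ | hm'
    · exact Or.inl (Or.inr ⟨i, hi, rfl⟩)
    · exact Or.inr ⟨i, hm, rfl⟩
    · exact Or.inl (Or.inl (Nat.lt_succ_of_le hm'))
  · rintro ((hm | ⟨i, hi, rfl⟩) | ⟨i, hi, rfl⟩)
    · exact hm.trans_le (hab.lt_a n)
    · exact hab.a_strictMono hi
    · exact hi

lemma a_eq_add_bCount (hab : MexSeq ℓ a b) (n : ℕ) : a n = n + bCount a b n + ℓ + 1 := by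
  have hdisj₁ : Disjoint (Finset.range (ℓ + 1)) ((Finset.range n).image a) := by
    simp only [Finset.disjoint_left, Finset.mem_range, Finset.mem_image]
    rintro m hm ⟨i, -, rfl⟩
    exact absurd (hab.lt_a i) (by omega)
  have hdisj₂ : Disjoint (Finset.range (ℓ + 1) ∪ (Finset.range n).image a)
      ((Finset.range (bCount a b n)).image b) := by
    simp only [Finset.disjoint_left, Finset.mem_union, Finset.mem_range, Finset.mem_image]
    rintro m (hm | ⟨j, -, rfl⟩) ⟨i, -, hi⟩
    · have := hab.lt_a i
      have := hab.b_eq i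
      omega
    · exact hab.a_ne_b j i hi.symm
  have := congrArg Finset.card (hab.range_a_eq n)
  rw [Finset.card_union_of_disjoint hdisj₂, Finset.card_union_of_disjoint hdisj₁,
    Finset.card_image_of_injective _ hab.a_strictMono.injective,
    Finset.card_image_of_injective _ hab.b_strictMono.injective] at this
  simp only [Finset.card_range] at this
  omega

lemma le_bCount_add_bCount_bCount (hab : MexSeq ℓ a b) (n : ℕ) :
    n ≤ bCount a b n + bCount a b (bCount a b n) + ℓ := by
  have hle := (hab.lt_bCount_iff n (bCount a b n)).not.1 (lt_irrefl _)
  have hne := hab.a_ne_b n (bCount a b n)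
  have := hab.b_eq (bCount a b n)
  have := hab.a_eq_add_bCount (bCount a b n)
  have := hab.a_eq_add_bCount n
  omega

lemma bCount_add_bCount_pred_le (hab : MexSeq ℓ a b) {n : ℕ} (h : bCount a b n ≠ 0) :
    bCount a b n + bCount a b (bCount a b n - 1) + ℓ ≤ n := by
  have hlt := (hab.lt_bCount_iff n (bCount a b n - 1)).1 (by omega)
  have := hab.b_eq (bCount a b n - 1)
  have := hab.a_eq_add_bCount (bCount a b n - 1)
  have := hab.a_eq_add_bCount n
  omega

end MexSeq

section GoldenRecursion

variable {K : ℕ → ℕ} {c : ℕ}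

theorem mul_goldenRatio_bounds_of_recursion (hle : ∀ n, n ≤ K n + K (K n) + c)
    (hge : ∀ n, K n ≠ 0 → K n + K (K n - 1) + c ≤ n) (n : ℕ) :
    K n * φ ≤ n + 1 ∧ n * φ ≤ K n * φ ^ 2 + c * φ + 1 := by
  induction n using Nat.strong_induction_on with
  | _ n ih =>
  have hφ₁ := Real.one_lt_goldenRatio
  have hφ₂ := Real.goldenRatio_lt_two
  have hφsq := Real.goldenRatio_sq
  have hK : K n ≤ n := by
    rcases eq_or_ne (K n) 0 with h | h
    · omega
    · have := hge n h; omega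
  constructor
  · rcases eq_or_ne (K n) 0 with h0 | h0
    · rw [h0, Nat.cast_zero, zero_mul]; positivity
    · have hrec : (K n : ℝ) + K (K n - 1) + c ≤ n := by exact_mod_cast hge n h0
      have ih' := (ih (K n - 1) (by omega)).2
      rw [Nat.cast_sub (Nat.one_le_iff_ne_zero.2 h0), Nat.cast_one, hφsq] at ih'
      -- multiply the bound at `K n - 1` by `φ - 1 = φ⁻¹`
      nlinarith [mul_le_mul_of_nonneg_left ih' (sub_nonneg.2 hφ₁.le),
        mul_nonneg (Nat.cast_nonneg (α := ℝ) c) (sub_nonneg.2 hφ₂.le)]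
  · rcases hK.lt_or_eq with hlt | heq
    · have hrec : (n : ℝ) ≤ K n + K (K n) + c := by exact_mod_cast hle n
      have ih' := (ih (K n) hlt).1
      nlinarith
    · rw [heq]
      nlinarith [Nat.cast_nonneg (α := ℝ) n, Nat.cast_nonneg (α := ℝ) c]

theorem abs_sub_div_goldenRatio_le_of_recursion (hc : 1 ≤ c)
    (hle : ∀ n, n ≤ K n + K (K n) + c) (hge : ∀ n, K n ≠ 0 → K n + K (K n - 1) + c ≤ n)
    (n : ℕ) : |(K n : ℝ) - n / φ| ≤ φ * c := by
  obtain ⟨hup, hlow⟩ := mul_goldenRatio_bounds_of_recursion hle hge n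
  have hφ₁ := Real.one_lt_goldenRatio
  have hφsq := Real.goldenRatio_sq
  have hc' : (1 : ℝ) ≤ c := by exact_mod_cast hc
  set x := (n : ℝ) / φ
  have hx : (n : ℝ) = x * φ := (div_mul_cancel₀ _ Real.goldenRatio_ne_zero).symm
  rw [hx] at hup hlow
  rw [abs_le]
  constructor
  · nlinarith
  · nlinarith

end GoldenRecursion

theorem mexSeq_D_bound (ℓ : ℕ) (hℓ : 1 ≤ ℓ) (a b : ℕ → ℕ)
    (hab : MexSeq ℓ a b) :
    ∀ n : ℕ,
      |(Set.ncard {i : ℕ | b i < a n} : ℝ) - (n : ℝ) / phi| ≤ phi * ℓ :=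
  abs_sub_div_goldenRatio_le_of_recursion hℓ hab.le_bCount_add_bCount_bCount
    (fun _ => hab.bCount_add_bCount_pred_le)
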